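/- Let I = (Σ, D, M) be a Strands instance with grid M ∈ Σ^{n×m} such that, if I is solvable, then I is solvable without diagonal moves. Define the 4-coloring c(i, j) ∈ {1, 2, 3, 4} of grid cells by the parities of i and j (c = 1 if i, j both even; c = 2 if i even, j odd; c = 3 if i odd, j even; c = 4 if i, j both odd), and let P₁ = {2,3}, P₂ = {1,4}, P₃ = {1,4}, P₄ = {2,3}. Assume Σ ∩ {1,2,3,4} = ∅ and define I₂ = (Σ ∪ {1,2,3,4}, D₂, M₂), where M₂ ∈ (Σ ∪ {1,2,3,4})^{3n×3m} is obtained by replacing each cell (i, j) of M by the 3×3 block whose center is M(i, j) and whose eight perimeter cells all carry c(i, j), and where, writing Wᵢ(τ) for the 9-character string i i i i i i τ i i and Gₖ for the set of strings g ∈ {1,2,3,4}ᵏ with g_{t+1} ∈ P_{g_t} for all t, D₂ = { W_{g₁}(w₁) ∘ W_{g₂}(w₂) ∘ ⋯ ∘ W_{gₖ}(wₖ) : w = w₁⋯wₖ ∈ D, g ∈ Gₖ }. Then I₂ is solvable if and only if I is solvable; moreover, if I₂ is solvable then I₂ is solvable without diagonal moves. -/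

import Mathlib

/-!
Strands: a grid `M : Fin n → Fin m → A` over an alphabet `A` and a dictionary
`D : Set (List A)`.  A placement of a word `w` is a list of pairwise distinct cells,
consecutive cells adjacent, spelling `w`; the instance is solvable if the cells of the
grid can be partitioned into placements of dictionary words.
-/

/-- King adjacency of grid cells (horizontal, vertical or diagonal neighbours). -/
def KingAdj {n m : ℕ} (c d : Fin n × Fin m) : Prop :=
  c ≠ d ∧ ((c.1 : ℤ) - (d.1 : ℤ)).natAbs ≤ 1 ∧ ((c.2 : ℤ) - (d.2 : ℤ)).natAbs ≤ 1

/-- Orthogonal adjacency of grid cells (horizontal or vertical neighbours only). -/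
def OrthAdj {n m : ℕ} (c d : Fin n × Fin m) : Prop :=
  ((c.1 : ℤ) - (d.1 : ℤ)).natAbs + ((c.2 : ℤ) - (d.2 : ℤ)).natAbs = 1

/-- `cs` is a placement of the word `w` in the grid `M`, with respect to the adjacency
relation `adj`: its cells are pairwise distinct, consecutive cells are adjacent, and the
cells spell out `w`. -/
def IsPlacement {n m : ℕ} {A : Type} (adj : (Fin n × Fin m) → (Fin n × Fin m) → Prop)
    (M : Fin n → Fin m → A) (w : List A) (cs : List (Fin n × Fin m)) : Prop :=
  cs.Nodup ∧ cs.Chain' adj ∧ cs.map (fun c => M c.1 c.2) = w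

/-- The Strands instance `(A, D, M)` is solvable (with respect to the adjacency
relation `adj`): the cells of the grid can be partitioned into placements of words
from `D`. -/
def StrandsSolvable {n m : ℕ} {A : Type}
    (adj : (Fin n × Fin m) → (Fin n × Fin m) → Prop)
    (M : Fin n → Fin m → A) (D : Set (List A)) : Prop :=
  ∃ P : List (List (Fin n × Fin m)),
    (∀ cs ∈ P, ∃ w ∈ D, IsPlacement adj M w cs) ∧
    P.flatten.Nodup ∧ (∀ c : Fin n × Fin m, c ∈ P.flatten)

/-- The 4-colouring of grid cells by the parities of the coordinates:
`0,1,2,3` stand for the colours `1,2,3,4` of the paper. -/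
def cellColor (i j : ℕ) : Fin 4 :=
  if i % 2 = 0 then (if j % 2 = 0 then 0 else 1) else (if j % 2 = 0 then 2 else 3)

/-- The colours reachable from a given colour: `P₁ = {2,3}`, `P₂ = {1,4}`,
`P₃ = {1,4}`, `P₄ = {2,3}`. -/
def colorNext : Fin 4 → Finset (Fin 4) := ![{1, 2}, {0, 3}, {0, 3}, {1, 2}]

/-- The blown-up grid `M₂ ∈ (Σ ∪ {1,2,3,4})^{3n×3m}`: each cell `(i, j)` of `M` is
replaced by a `3×3` block whose centre carries `M i j` and whose perimeter carries the
colour `c(i, j)`. -/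
def blowupGrid {n m : ℕ} {A : Type} (M : Fin n → Fin m → A)
    (r : Fin (3 * n)) (c : Fin (3 * m)) : A ⊕ Fin 4 :=
  if (r : ℕ) % 3 = 1 ∧ (c : ℕ) % 3 = 1 then
    Sum.inl (M ⟨(r : ℕ) / 3, by omega⟩ ⟨(c : ℕ) / 3, by omega⟩)
  else Sum.inr (cellColor ((r : ℕ) / 3) ((c : ℕ) / 3))

/-- The 9-character string `W_g(τ) = g g g g g g τ g g`. -/
def blowupW {A : Type} (g : Fin 4) (τ : A) : List (A ⊕ Fin 4) :=
  [Sum.inr g, Sum.inr g, Sum.inr g, Sum.inr g, Sum.inr g, Sum.inr g,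
   Sum.inl τ, Sum.inr g, Sum.inr g]

/-- The blown-up dictionary
`D₂ = {W_{g₁}(w₁) ∘ ⋯ ∘ W_{gₖ}(wₖ) : w ∈ D, g ∈ G_{|w|}}`. -/
def blowupDict {A : Type} (D : Set (List A)) : Set (List (A ⊕ Fin 4)) :=
  {u | ∃ w ∈ D, ∃ g : List (Fin 4), g.length = w.length ∧
    g.Chain' (fun a b => b ∈ colorNext a) ∧ u = (List.zipWith blowupW g w).flatten}

/-!
Each cell of `M` becomes a `3 × 3` block carrying its letter at the centre and its colour on
the rim; blocks that touch, even diagonally, have different colours.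

Blown-up to original: in a placement of `W_{g₁}(w₁) ⋯ W_{gₖ}(wₖ)`, consecutive letters of one
`W_g(τ)` are equal or involve the centre letter, and king-adjacent cells with equal rim colours
or next to a centre lie in one block, so each `W_{gᵢ}(wᵢ)` is placed inside a single block `Bᵢ`
with letter `wᵢ`. Consecutive blocks are distinct, since `gᵢ₊₁ ∈ P_{gᵢ}` and no colour lies in
its own `P`, and they touch, so the centres read in order place `w`.

Original to blown-up, without diagonal moves: traverse each block by a path from a corner to an
adjacent corner through all nine cells, visiting the centre seventh; the exit corner is chosen
on the side facing the next block and the next block is entered at the mirror-image corner.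
Orthogonally adjacent blocks have colours `a`, `b` with `b ∈ P_a`, so the colours of the blocks
form a sequence in `G_k`.
-/

section

variable {n m : ℕ} {A : Type}

lemma StrandsSolvable.mono {M : Fin n → Fin m → A} {D : Set (List A)}
    {adj adj' : (Fin n × Fin m) → (Fin n × Fin m) → Prop} (hadj : ∀ c d, adj c d → adj' c d)
    (h : StrandsSolvable adj M D) : StrandsSolvable adj' M D := by
  obtain ⟨P, hP, hnodup, hcover⟩ := h
  refine ⟨P, fun cs hcs => ?_, hnodup, hcover⟩
  obtain ⟨w, hw, hnd, hch, hsp⟩ := hP cs hcs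
  exact ⟨w, hw, hnd, hch.imp hadj, hsp⟩

lemma OrthAdj.kingAdj {c d : Fin n × Fin m} (h : OrthAdj c d) : KingAdj c d := by
  unfold OrthAdj at h
  exact ⟨by rintro rfl; simp at h, by omega, by omega⟩

instance : DecidableRel (OrthAdj (n := n) (m := m)) :=
  fun _ _ => inferInstanceAs (Decidable (_ = _))

lemma List.IsChain.and {α : Type*} {R S : α → α → Prop} {l : List α} (hR : l.IsChain R)
    (hS : l.IsChain S) : l.IsChain fun a b => R a b ∧ S a b :=
  List.isChain_iff_getElem.mpr fun i h =>
    ⟨List.isChain_iff_getElem.mp hR i h, List.isChain_iff_getElem.mp hS i h⟩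

section Blocks

def blockOf (c : Fin (3 * n) × Fin (3 * m)) : Fin n × Fin m :=
  (⟨c.1 / 3, by omega⟩, ⟨c.2 / 3, by omega⟩)

def blockCell (b : Fin n × Fin m) (p : Fin 3 × Fin 3) : Fin (3 * n) × Fin (3 * m) :=
  (⟨3 * b.1 + p.1, by omega⟩, ⟨3 * b.2 + p.2, by omega⟩)

def blockCenter (b : Fin n × Fin m) : Fin (3 * n) × Fin (3 * m) := blockCell b (1, 1)

def isCenter (c : Fin (3 * n) × Fin (3 * m)) : Bool :=
  decide ((c.1 : ℕ) % 3 = 1 ∧ (c.2 : ℕ) % 3 = 1)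

def blockColor (b : Fin n × Fin m) : Fin 4 := cellColor b.1 b.2

lemma blockOf_blockCell (b : Fin n × Fin m) (p : Fin 3 × Fin 3) : blockOf (blockCell b p) = b := by
  simp only [blockOf, blockCell, Prod.ext_iff, Fin.ext_iff]
  omega

lemma blockCell_injective (b : Fin n × Fin m) : Function.Injective (blockCell b) := by
  intro p q h
  simp only [blockCell, Prod.ext_iff, Fin.ext_iff] at h ⊢
  omega

lemma exists_blockCell_eq (c : Fin (3 * n) × Fin (3 * m)) : ∃ p, blockCell (blockOf c) p = c :=
  ⟨(⟨c.1 % 3, by omega⟩, ⟨c.2 % 3, by omega⟩), by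
    simp only [blockOf, blockCell, Prod.ext_iff, Fin.ext_iff]
    omega⟩

lemma isCenter_blockCell (b : Fin n × Fin m) (p : Fin 3 × Fin 3) :
    isCenter (blockCell b p) = decide (p = (1, 1)) := by
  simp only [isCenter, blockCell, Prod.ext_iff, Fin.ext_iff, Fin.val_one]
  congr 1
  apply propext
  omega

lemma isCenter_blockCenter (b : Fin n × Fin m) : isCenter (blockCenter b) := by
  simp [blockCenter, isCenter_blockCell]

lemma blockCenter_blockOf {c : Fin (3 * n) × Fin (3 * m)} (hc : isCenter c) :
    blockCenter (blockOf c) = c := by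
  simp only [isCenter, decide_eq_true_eq] at hc
  simp only [blockCenter, blockOf, blockCell, Prod.ext_iff, Fin.ext_iff]
  omega

lemma blowupGrid_apply (M : Fin n → Fin m → A) (c : Fin (3 * n) × Fin (3 * m)) :
    blowupGrid M c.1 c.2 = if isCenter c then .inl (M (blockOf c).1 (blockOf c).2)
      else .inr (blockColor (blockOf c)) := by
  simp only [blowupGrid, isCenter, decide_eq_true_eq]
  rfl

lemma isLeft_blowupGrid (M : Fin n → Fin m → A) (c : Fin (3 * n) × Fin (3 * m)) :
    (blowupGrid M c.1 c.2).isLeft = isCenter c := by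
  rw [blowupGrid_apply]
  split <;> simp_all

lemma blowupGrid_blockCell (M : Fin n → Fin m → A) (b : Fin n × Fin m) (p : Fin 3 × Fin 3) :
    blowupGrid M (blockCell b p).1 (blockCell b p).2 =
      if p = (1, 1) then .inl (M b.1 b.2) else .inr (blockColor b) := by
  simp only [blowupGrid_apply, isCenter_blockCell, blockOf_blockCell, decide_eq_true_eq]

end Blocks

section Colors

lemma cellColor_eq_cellColor_iff {i j i' j' : ℕ} :
    cellColor i j = cellColor i' j' ↔ i % 2 = i' % 2 ∧ j % 2 = j' % 2 := by
  unfold cellColor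
  split_ifs <;>
    simp only [Fin.reduceEq, one_ne_zero, zero_ne_one, true_iff, false_iff, not_and] <;> omega

lemma notMem_colorNext_self (a : Fin 4) : a ∉ colorNext a := by
  revert a
  decide

lemma OrthAdj.blockColor_mem_colorNext {b b' : Fin n × Fin m} (h : OrthAdj b b') :
    blockColor b' ∈ colorNext (blockColor b) := by
  unfold OrthAdj at h
  unfold blockColor cellColor
  split_ifs <;> first | omega | decide

end Colors

section KingMoves

variable {c d : Fin (3 * n) × Fin (3 * m)}

lemma KingAdj.blockOf_eq_of_isCenter (h : KingAdj c d) (hc : isCenter c ∨ isCenter d) :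
    blockOf c = blockOf d := by
  obtain ⟨-, h1, h2⟩ := h
  simp only [isCenter, decide_eq_true_eq] at hc
  simp only [blockOf, Prod.ext_iff, Fin.ext_iff]
  omega

lemma KingAdj.blockOf_eq_of_blockColor_eq (h : KingAdj c d)
    (hcol : blockColor (blockOf c) = blockColor (blockOf d)) : blockOf c = blockOf d := by
  obtain ⟨-, h1, h2⟩ := h
  have := cellColor_eq_cellColor_iff.mp hcol
  simp only [blockOf, Prod.ext_iff, Fin.ext_iff] at this ⊢
  omega

lemma KingAdj.kingAdj_blockOf (h : KingAdj c d) (hne : blockOf c ≠ blockOf d) :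
    KingAdj (blockOf c) (blockOf d) := by
  obtain ⟨-, h1, h2⟩ := h
  exact ⟨hne, by simp only [blockOf]; omega, by simp only [blockOf]; omega⟩

def BlockLink (x y : A ⊕ Fin 4) : Prop := x = y ∨ x.isLeft ∨ y.isLeft

lemma KingAdj.blockOf_eq_of_blockLink {M : Fin n → Fin m → A} (h : KingAdj c d)
    (hl : BlockLink (blowupGrid M c.1 c.2) (blowupGrid M d.1 d.2)) : blockOf c = blockOf d := by
  by_cases hcen : isCenter c ∨ isCenter d
  · exact h.blockOf_eq_of_isCenter hcen
  · simp only [not_or, Bool.not_eq_true] at hcen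
    simp only [BlockLink, blowupGrid_apply, hcen, Bool.false_eq_true, if_false, Sum.inr.injEq,
      Sum.isLeft_inr, or_false] at hl
    exact h.blockOf_eq_of_blockColor_eq hl

lemma isChain_blockLink_blowupW (g : Fin 4) (τ : A) : (blowupW g τ).IsChain BlockLink := by
  simp [blowupW, BlockLink]

end KingMoves

def blowupWord (g : List (Fin 4)) (w : List A) : List (A ⊕ Fin 4) :=
  (List.zipWith blowupW g w).flatten

section CenterBlocks

def centerBlocks (cs : List (Fin (3 * n) × Fin (3 * m))) : List (Fin n × Fin m) :=
  (cs.filter isCenter).map blockOf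

lemma centerBlocks_append (cs cs' : List (Fin (3 * n) × Fin (3 * m))) :
    centerBlocks (cs ++ cs') = centerBlocks cs ++ centerBlocks cs' := by
  simp [centerBlocks]

lemma centerBlocks_flatten (L : List (List (Fin (3 * n) × Fin (3 * m)))) :
    centerBlocks L.flatten = (L.map centerBlocks).flatten := by
  simp only [centerBlocks, List.filter_flatten, List.map_flatten, List.map_map]
  rfl

lemma mem_centerBlocks {cs : List (Fin (3 * n) × Fin (3 * m))} {b : Fin n × Fin m} :
    b ∈ centerBlocks cs ↔ blockCenter b ∈ cs := by
  simp only [centerBlocks, List.mem_map, List.mem_filter]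
  constructor
  · rintro ⟨c, ⟨hc, hcen⟩, rfl⟩
    rwa [blockCenter_blockOf hcen]
  · intro hb
    exact ⟨blockCenter b, ⟨hb, isCenter_blockCenter b⟩, blockOf_blockCell b _⟩

lemma nodup_centerBlocks {cs : List (Fin (3 * n) × Fin (3 * m))} (h : cs.Nodup) :
    (centerBlocks cs).Nodup := by
  refine (h.filter _).map_on fun c hc d hd hcd => ?_
  rw [← blockCenter_blockOf (List.mem_filter.mp hc).2,
    ← blockCenter_blockOf (List.mem_filter.mp hd).2, hcd]

variable {M : Fin n → Fin m → A}

lemma exists_block_of_spells_blowupW {g : Fin 4} {τ : A} {cs : List (Fin (3 * n) × Fin (3 * m))}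
    (hsp : cs.map (fun c => blowupGrid M c.1 c.2) = blowupW g τ) (hch : cs.IsChain KingAdj) :
    ∃ B, blockColor B = g ∧ M B.1 B.2 = τ ∧ (∀ c ∈ cs, blockOf c = B) ∧ centerBlocks cs = [B] := by
  have hlink : cs.IsChain fun c d => blockOf c = blockOf d := by
    have := isChain_blockLink_blowupW g τ
    rw [← hsp, List.isChain_map] at this
    exact (hch.and this).imp fun c d h => h.1.blockOf_eq_of_blockLink h.2
  obtain ⟨c₀, cs', rfl, hc₀, -⟩ := List.map_eq_cons_iff.mp hsp
  have hsame : ∀ c ∈ c₀ :: cs', blockOf c = blockOf c₀ := by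
    rw [← List.isChain_map, List.isChain_eq_iff_eq_replicate] at hlink
    intro c hc
    exact List.eq_of_mem_replicate (hlink _ rfl ▸ List.mem_map_of_mem hc)
  have hcenter : ((c₀ :: cs').filter isCenter).map (fun c => blowupGrid M c.1 c.2)
      = [.inl τ] := by
    rw [List.filter_congr fun c _ => (isLeft_blowupGrid M c).symm,
      ← Function.comp_def Sum.isLeft, ← List.filter_map, hsp]
    simp [blowupW, List.filter_cons]
  obtain ⟨c, hfilter, hc⟩ := List.map_eq_singleton_iff.mp hcenter
  have hc_mem : c ∈ (c₀ :: cs').filter isCenter := hfilter ▸ List.mem_singleton_self c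
  rw [List.mem_filter] at hc_mem
  rw [blowupGrid_apply, if_pos hc_mem.2, Sum.inl.injEq] at hc
  rw [blowupGrid_apply] at hc₀
  split_ifs at hc₀
  refine ⟨blockOf c₀, Sum.inr.inj hc₀, hsame c hc_mem.1 ▸ hc, hsame, ?_⟩
  simp only [centerBlocks, hfilter, List.map_singleton, hsame c hc_mem.1]

lemma centerBlocks_of_spells_blowupWord : ∀ {g : List (Fin 4)} {w : List A}
    {cs : List (Fin (3 * n) × Fin (3 * m))}, g.length = w.length →
    g.IsChain (fun a b => b ∈ colorNext a) →
    cs.map (fun c => blowupGrid M c.1 c.2) = blowupWord g w → cs.IsChain KingAdj →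
    (centerBlocks cs).IsChain KingAdj ∧ (centerBlocks cs).map (fun b => M b.1 b.2) = w ∧
      (centerBlocks cs).map blockColor = g ∧ cs.head?.map blockOf = (centerBlocks cs).head?
  | [], [], cs, _, _, hsp, _ => by
    obtain rfl : cs = [] := List.map_eq_nil_iff.mp hsp
    simp [centerBlocks]
  | gh :: gt, τ :: wt, cs, hlen, hg, hsp, hch => by
    rw [blowupWord, List.zipWith_cons_cons, List.flatten_cons, List.map_eq_append_iff] at hsp
    obtain ⟨cs₁, cs₂, rfl, hsp₁, hsp₂⟩ := hsp
    obtain ⟨hg_head, hg_tail⟩ := List.isChain_cons.mp hg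
    obtain ⟨hch₁, hch₂, hjoin⟩ := List.isChain_append.mp hch
    obtain ⟨B, hB_color, hB_letter, hB, hcenter₁⟩ := exists_block_of_spells_blowupW hsp₁ hch₁
    obtain ⟨ih_chain, ih_letters, ih_colors, ih_head⟩ :=
      centerBlocks_of_spells_blowupWord (by simpa using hlen) hg_tail hsp₂ hch₂
    have hcs₁ : cs₁ ≠ [] := by rintro rfl; simp [centerBlocks] at hcenter₁
    obtain ⟨x, hx⟩ := Option.isSome_iff_exists.mp (List.getLast?_isSome.mpr hcs₁)
    have hxB : blockOf x = B := hB x (List.mem_of_mem_getLast? hx)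
    rw [centerBlocks_append, hcenter₁, List.singleton_append]
    refine ⟨ih_chain.cons ?_, by simp [hB_letter, ih_letters], by simp [hB_color, ih_colors], ?_⟩
    · intro b' hb'
      rw [← ih_head, Option.mem_map] at hb'
      obtain ⟨y, hy, rfl⟩ := hb'
      have hy_color : blockColor (blockOf y) ∈ colorNext gh := by
        refine hg_head _ ?_
        rw [← ih_colors, List.head?_map, ← ih_head, Option.map_map, Option.mem_map]
        exact ⟨y, hy, rfl⟩
      have hne : blockOf x ≠ blockOf y := fun h =>
        notMem_colorNext_self gh (by rwa [← h, hxB, hB_color] at hy_color)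
      exact hxB ▸ (hjoin x hx y hy).kingAdj_blockOf hne
    · obtain ⟨c, cs, rfl⟩ := List.exists_cons_of_ne_nil hcs₁
      simp [hB c List.mem_cons_self]

lemma IsPlacement.centerBlocks_of_mem_blowupDict {D : Set (List A)} {u : List (A ⊕ Fin 4)}
    {cs : List (Fin (3 * n) × Fin (3 * m))} (hcs : IsPlacement KingAdj (blowupGrid M) u cs)
    (hu : u ∈ blowupDict D) : ∃ w ∈ D, IsPlacement KingAdj M w (centerBlocks cs) := by
  obtain ⟨hnodup, hchain, hspell⟩ := hcs
  obtain ⟨w, hw, g, hlen, hg, rfl⟩ := hu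
  obtain ⟨hchain', hletters, -⟩ := centerBlocks_of_spells_blowupWord hlen hg hspell hchain
  exact ⟨w, hw, nodup_centerBlocks hnodup, hchain', hletters⟩

lemma StrandsSolvable.of_blowup {D : Set (List A)}
    (h : StrandsSolvable KingAdj (blowupGrid M) (blowupDict D)) : StrandsSolvable KingAdj M D := by
  obtain ⟨P, hP, hnodup, hcover⟩ := h
  refine ⟨P.map centerBlocks, ?_, ?_, fun b => ?_⟩
  · simp only [List.mem_map, forall_exists_index, and_imp, forall_apply_eq_imp_iff₂]
    intro cs hcs
    obtain ⟨u, hu, hplace⟩ := hP cs hcs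
    exact hplace.centerBlocks_of_mem_blowupDict hu
  · rw [← centerBlocks_flatten]
    exact nodup_centerBlocks hnodup
  · rw [← centerBlocks_flatten, mem_centerBlocks]
    exact hcover _

end CenterBlocks

section LocalPaths

def corner (e : Bool × Bool) : Fin 3 × Fin 3 := (if e.1 then 2 else 0, if e.2 then 2 else 0)

def flipCorner (e : Bool × Bool) (f : Bool) : Bool × Bool :=
  if f then (!e.1, e.2) else (e.1, !e.2)

/-- A path through the whole block from `corner e` to `corner (flipCorner e f)`, visiting the
centre seventh, as `W_g(τ)` requires. -/
def localPath (e : Bool × Bool) (f : Bool) : List (Fin 3 × Fin 3) :=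
  (if f then [(0, 0), (0, 1), (0, 2), (1, 2), (2, 2), (2, 1), (1, 1), (1, 0), (2, 0)]
    else [(0, 0), (1, 0), (2, 0), (2, 1), (2, 2), (1, 2), (1, 1), (0, 1), (0, 2)]).map
    fun p => (if e.1 then p.1.rev else p.1, if e.2 then p.2.rev else p.2)

lemma localPath_nodup (e : Bool × Bool) (f : Bool) : (localPath e f).Nodup := by
  revert e f
  decide

lemma mem_localPath (e : Bool × Bool) (f : Bool) (p : Fin 3 × Fin 3) : p ∈ localPath e f := by
  revert e f p
  decide

lemma isChain_localPath (e : Bool × Bool) (f : Bool) : (localPath e f).IsChain OrthAdj := by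
  revert e f
  decide

lemma head?_localPath (e : Bool × Bool) (f : Bool) : (localPath e f).head? = some (corner e) := by
  revert e f
  decide

lemma getLast?_localPath (e : Bool × Bool) (f : Bool) :
    (localPath e f).getLast? = some (corner (flipCorner e f)) := by
  revert e f
  decide

lemma map_localPath_ite_center {β : Type*} (e : Bool × Bool) (f : Bool) (u v : β) :
    (localPath e f).map (fun p => if p = (1, 1) then u else v) = [v, v, v, v, v, v, u, v, v] := by
  obtain ⟨_ | _, _ | _⟩ := e <;> cases f <;> rfl

end LocalPaths

section BlockPaths

def blockPath (b : Fin n × Fin m) (e : Bool × Bool) (f : Bool) :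
    List (Fin (3 * n) × Fin (3 * m)) :=
  (localPath e f).map (blockCell b)

variable {b b' : Fin n × Fin m} {e : Bool × Bool} {f : Bool}

lemma mem_blockPath {c : Fin (3 * n) × Fin (3 * m)} : c ∈ blockPath b e f ↔ blockOf c = b := by
  constructor
  · intro hc
    obtain ⟨p, -, rfl⟩ := List.mem_map.mp hc
    exact blockOf_blockCell b p
  · intro h
    obtain ⟨p, hp⟩ := exists_blockCell_eq c
    rw [← hp, h]
    exact List.mem_map_of_mem (mem_localPath e f p)

lemma nodup_blockPath : (blockPath b e f).Nodup :=
  (localPath_nodup e f).map (blockCell_injective b)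

lemma orthAdj_blockCell {p q : Fin 3 × Fin 3} :
    OrthAdj (blockCell b p) (blockCell b q) ↔ OrthAdj p q := by
  unfold OrthAdj
  simp only [blockCell]
  omega

lemma isChain_blockPath : (blockPath b e f).IsChain OrthAdj :=
  (List.isChain_map _).mpr <| (isChain_localPath e f).imp fun _ _ => orthAdj_blockCell.mpr

lemma map_blockPath (M : Fin n → Fin m → A) :
    (blockPath b e f).map (fun c => blowupGrid M c.1 c.2) = blowupW (blockColor b) (M b.1 b.2) := by
  simp only [blockPath, List.map_map, Function.comp_def, blowupGrid_blockCell]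
  exact map_localPath_ite_center e f _ _

lemma head?_blockPath : (blockPath b e f).head? = some (blockCell b (corner e)) := by
  simp [blockPath, head?_localPath]

lemma getLast?_blockPath :
    (blockPath b e f).getLast? = some (blockCell b (corner (flipCorner e f))) := by
  simp [blockPath, List.getLast?_map, getLast?_localPath]

/-- Leaving `b` towards `b'`, the exit corner is on the side of `b` facing `b'`, and `b'` is
entered at the adjacent corner `nextEntry e b b'`. -/
def exitFlip (e : Bool × Bool) (b b' : Fin n × Fin m) : Bool :=
  if b.1 ≠ b'.1 then e.1 != decide (b.1 < b'.1) else e.2 == decide (b.2 < b'.2)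

def nextEntry (e : Bool × Bool) (b b' : Fin n × Fin m) : Bool × Bool :=
  flipCorner (flipCorner e (exitFlip e b b')) (decide (b.1 ≠ b'.1))

lemma OrthAdj.orthAdj_exit_nextEntry (h : OrthAdj b b') (e : Bool × Bool) :
    OrthAdj (blockCell b (corner (flipCorner e (exitFlip e b b'))))
      (blockCell b' (corner (nextEntry e b b'))) := by
  obtain ⟨e₁, e₂⟩ := e
  unfold OrthAdj at h ⊢
  simp only [nextEntry, exitFlip, flipCorner, corner, blockCell, Fin.lt_def]
  cases e₁ <;> cases e₂ <;> split_ifs <;> simp_all <;> omega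

end BlockPaths

section BlowupPath

/-- The exit corner of the last block is irrelevant; `bs.headD b` fills it in. -/
def blowupPath : Bool × Bool → List (Fin n × Fin m) → List (Fin (3 * n) × Fin (3 * m))
  | _, [] => []
  | e, b :: bs =>
    blockPath b e (exitFlip e b (bs.headD b)) ++ blowupPath (nextEntry e b (bs.headD b)) bs

lemma mem_blowupPath {c : Fin (3 * n) × Fin (3 * m)} :
    ∀ {e : Bool × Bool} {bs : List (Fin n × Fin m)}, c ∈ blowupPath e bs ↔ blockOf c ∈ bs
  | _, [] => by simp [blowupPath]
  | _, b :: bs => by simp [blowupPath, mem_blockPath, mem_blowupPath, eq_comm]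

lemma nodup_blowupPath : ∀ {e : Bool × Bool} {bs : List (Fin n × Fin m)}, bs.Nodup →
    (blowupPath e bs).Nodup
  | _, [], _ => List.nodup_nil
  | _, b :: bs, h => by
    rw [List.nodup_cons] at h
    refine List.nodup_append.mpr ⟨nodup_blockPath, nodup_blowupPath h.2, fun c hc d hd hcd => ?_⟩
    rw [mem_blockPath] at hc
    rw [mem_blowupPath, ← hcd, hc] at hd
    exact h.1 hd

lemma map_blowupPath (M : Fin n → Fin m → A) : ∀ (e : Bool × Bool) (bs : List (Fin n × Fin m)),
    (blowupPath e bs).map (fun c => blowupGrid M c.1 c.2)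
      = blowupWord (bs.map blockColor) (bs.map fun b => M b.1 b.2)
  | _, [] => rfl
  | _, b :: bs => by
    rw [blowupPath, List.map_append, map_blockPath, map_blowupPath]
    rfl

lemma head?_blowupPath (e : Bool × Bool) (bs : List (Fin n × Fin m)) :
    (blowupPath e bs).head? = bs.head?.map (blockCell · (corner e)) := by
  cases bs with
  | nil => rfl
  | cons b bs => simp [blowupPath, List.head?_append, head?_blockPath]

lemma isChain_blowupPath : ∀ {e : Bool × Bool} {bs : List (Fin n × Fin m)},
    bs.IsChain OrthAdj → (blowupPath e bs).IsChain OrthAdj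
  | _, [], _ => List.IsChain.nil
  | e, b :: bs, h => by
    rw [List.isChain_cons] at h
    refine List.isChain_append.mpr ⟨isChain_blockPath, isChain_blowupPath h.2, ?_⟩
    intro x hx y hy
    cases bs with
    | nil => simp [blowupPath] at hy
    | cons b' bs =>
      simp only [getLast?_blockPath, head?_blowupPath, List.head?_cons, List.headD_cons,
        Option.map_some, Option.mem_some_iff] at hx hy
      exact hx ▸ hy ▸ (h.1 b' rfl).orthAdj_exit_nextEntry e

variable {M : Fin n → Fin m → A}

lemma IsPlacement.blowupPath {w : List A} {bs : List (Fin n × Fin m)}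
    (hbs : IsPlacement OrthAdj M w bs) (e : Bool × Bool) :
    IsPlacement OrthAdj (blowupGrid M) (blowupWord (bs.map blockColor) w) (blowupPath e bs) :=
  ⟨nodup_blowupPath hbs.1, isChain_blowupPath hbs.2.1, hbs.2.2 ▸ map_blowupPath M e bs⟩

lemma blowupWord_mem_blowupDict {D : Set (List A)} {w : List A} {bs : List (Fin n × Fin m)}
    (hw : w ∈ D) (hbs : IsPlacement OrthAdj M w bs) :
    blowupWord (bs.map blockColor) w ∈ blowupDict D :=
  ⟨w, hw, bs.map blockColor, by rw [← hbs.2.2, List.length_map, List.length_map],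
    (List.isChain_map _).mpr (hbs.2.1.imp fun _ _ h => h.blockColor_mem_colorNext), rfl⟩

lemma StrandsSolvable.blowup {D : Set (List A)} (h : StrandsSolvable OrthAdj M D) :
    StrandsSolvable OrthAdj (blowupGrid M) (blowupDict D) := by
  obtain ⟨P, hP, hnodup, hcover⟩ := h
  have hmem : ∀ c, c ∈ (P.map (blowupPath (false, false))).flatten ↔ blockOf c ∈ P.flatten := by
    simp [List.mem_flatten, mem_blowupPath]
  refine ⟨P.map (blowupPath (false, false)), ?_, ?_, fun c => (hmem c).mpr (hcover _)⟩
  · simp only [List.mem_map, forall_exists_index, and_imp, forall_apply_eq_imp_iff₂]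
    intro bs hbs
    obtain ⟨w, hw, hplace⟩ := hP bs hbs
    exact ⟨_, blowupWord_mem_blowupDict hw hplace, hplace.blowupPath _⟩
  · rw [List.nodup_flatten] at hnodup ⊢
    refine ⟨by simpa using fun bs hbs => nodup_blowupPath (hnodup.1 bs hbs),
      List.pairwise_map.mpr (hnodup.2.imp fun hdisj c hc hc' => ?_)⟩
    exact hdisj (mem_blowupPath.mp hc) (mem_blowupPath.mp hc')

end BlowupPath

end

theorem strands_blowup_general {n m : ℕ} {A : Type}
    (M : Fin n → Fin m → A) (D : Set (List A))
    (hI : StrandsSolvable KingAdj M D → StrandsSolvable OrthAdj M D) :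
    (StrandsSolvable KingAdj (blowupGrid M) (blowupDict D) ↔
      StrandsSolvable KingAdj M D) ∧
    (StrandsSolvable KingAdj (blowupGrid M) (blowupDict D) →
      StrandsSolvable OrthAdj (blowupGrid M) (blowupDict D)) := by
  have blowup_of_king (h : StrandsSolvable KingAdj M D) :
      StrandsSolvable OrthAdj (blowupGrid M) (blowupDict D) := (hI h).blowup
  exact ⟨⟨StrandsSolvable.of_blowup, fun h => (blowup_of_king h).mono fun _ _ => OrthAdj.kingAdj⟩,
    fun h => blowup_of_king h.of_blowup⟩

/-- Blowing up a Strands instance: if the instance `I = (A, D, M)` is solvable only if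
it is solvable without diagonal moves, then the blown-up instance `I₂` is solvable iff
`I` is, and moreover if `I₂` is solvable then it is solvable without diagonal moves. -/
theorem strands_blowup {n m : ℕ} {A : Type}
    (M : Fin n → Fin m → A) (D : Set (List A)) (hD : ∀ w ∈ D, w ≠ [])
    (hI : StrandsSolvable KingAdj M D → StrandsSolvable OrthAdj M D) :
    (StrandsSolvable KingAdj (blowupGrid M) (blowupDict D) ↔
      StrandsSolvable KingAdj M D) ∧
    (StrandsSolvable KingAdj (blowupGrid M) (blowupDict D) →
      StrandsSolvable OrthAdj (blowupGrid M) (blowupDict D)) :=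
  strands_blowup_general M D hI
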